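/- Fix ε₀ > 0 sufficiently small, set α := 1 + ε₀ and ε₁ := ε₀²/18, and define λ_q := ⌊λ₀^{α^q}⌋, δ_q := λ_q^{−2/5+2ε₀}, μ_q := δ_{q−1}^{1/4} δ_q^{1/4} λ_{q−1}^{1/2} λ_q^{1/2} for q ≥ 1, with λ₀ sufficiently large. For q ≥ 1 define U^{(q)} := ⋃_{l ∈ ℤ, |l| ≤ μ_q} [ (l + 1/2)/μ_q − λ_q^{−ε₁}/μ_q , (l + 1/2)/μ_q + λ_q^{−ε₁}/μ_q ] and V^{(q)} := ⋃_{q' ≥ q} U^{(q')}. Then for every d ∈ (0,1) with d > (1+α)(4/5+ε₀)/((1+α)(4/5+ε₀)+2αε₁), the set Ω := ⋂_{q=1}^∞ V^{(q)} has Hausdorff dimension at most d; in particular, dimH Ω < 1 and Ω has Lebesgue measure zero. -/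

import Mathlib

open scoped BigOperators
open MeasureTheory

noncomputable section

/-- `λ_q := ⌊λ₀^{(1+ε₀)^q}⌋`. -/
def lamP (l₀ ε₀ : ℝ) (q : ℕ) : ℝ := ((⌊l₀ ^ ((1 + ε₀) ^ q)⌋ : ℤ) : ℝ)

/-- `δ_q := λ_q^{−2/5+2ε₀}`. -/
def delP (l₀ ε₀ : ℝ) (q : ℕ) : ℝ := lamP l₀ ε₀ q ^ (-(2 : ℝ)/5 + 2 * ε₀)

/-- `μ_q := δ_{q−1}^{1/4} δ_q^{1/4} λ_{q−1}^{1/2} λ_q^{1/2}` (for `q ≥ 1`). -/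
def muP (l₀ ε₀ : ℝ) (q : ℕ) : ℝ :=
  delP l₀ ε₀ (q - 1) ^ ((1 : ℝ)/4) * delP l₀ ε₀ q ^ ((1 : ℝ)/4)
    * lamP l₀ ε₀ (q - 1) ^ ((1 : ℝ)/2) * lamP l₀ ε₀ q ^ ((1 : ℝ)/2)

/-- `U^{(q)}`: the union over `l ∈ ℤ`, `|l| ≤ μ_q`, of the closed intervals of radius
`λ_q^{−ε₁}/μ_q` centred at `(l + 1/2)/μ_q`. -/
def Uq (l₀ ε₀ : ℝ) (q : ℕ) : Set ℝ :=
  ⋃ (l : ℤ) (_ : |(l : ℝ)| ≤ muP l₀ ε₀ q),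
    Set.Icc (((l : ℝ) + 1/2) / muP l₀ ε₀ q
        - lamP l₀ ε₀ q ^ (-(ε₀ ^ 2 / 18)) / muP l₀ ε₀ q)
      (((l : ℝ) + 1/2) / muP l₀ ε₀ q
        + lamP l₀ ε₀ q ^ (-(ε₀ ^ 2 / 18)) / muP l₀ ε₀ q)

/-- `V^{(q)} := ⋃_{q' ≥ q} U^{(q')}`. -/
def Vq (l₀ ε₀ : ℝ) (q : ℕ) : Set ℝ := ⋃ (q' : ℕ) (_ : q ≤ q'), Uq l₀ ε₀ q'

/-!
For every `Q`, the set `Ω ⊆ V^{(Q)}` is covered by the intervals making up `U^{(q)}`, `q ≥ Q`,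
and `U^{(q)}` consists of at most `3 μ_q` intervals of length `2 λ_q^{-ε₁} / μ_q`. So `Ω` lies in
the limsup of a countable family of intervals, and `μH[d] Ω = 0` as soon as the series
`∑_q μ_q (λ_q^{-ε₁} / μ_q)^d = ∑_q μ_q^{1-d} λ_q^{-ε₁ d}` converges (a Hausdorff–Cantelli lemma).
Since `λ_q ≈ λ₀^{α^q}` and `μ_q ≈ λ₀^{(1+α)(2/5+ε₀/2) α^{q-1}}`, its `q`-th term is
`≲ λ₀^{-c α^{q-1}}` with `c = α ε₁ d - (1-d)(1+α)(2/5+ε₀/2)`, and `c > 0` is exactly the hypothesis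
on `d`.
-/

open Filter Topology Metric
open scoped ENNReal

section HausdorffCantelli

variable {X : Type*} [EMetricSpace X] [MeasurableSpace X] [BorelSpace X]

theorem hausdorffMeasure_limsup_cofinite_eq_zero {ι : Type*} [Countable ι] {d : ℝ} (hd : 0 < d)
    (s : ι → Set X) (hs : ∑' i, ediam (s i) ^ d ≠ ∞) :
    μH[d] (limsup s cofinite) = 0 := by
  set tail : Finset ι → ℝ≥0∞ := fun F => ∑' i : {i // i ∉ F}, ediam (s i) ^ d
  have htail : Tendsto tail atTop (𝓝 0) := ENNReal.tendsto_tsum_compl_atTop_zero hs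
  have hr : Tendsto (fun F => tail F ^ d⁻¹) atTop (𝓝 0) := by
    have := ((ENNReal.continuous_rpow_const (y := d⁻¹)).tendsto 0).comp htail
    rwa [ENNReal.zero_rpow_of_pos (inv_pos.2 hd)] at this
  have hdiam : ∀ F (i : {i // i ∉ F}), ediam (s i) ≤ tail F ^ d⁻¹ := fun F i =>
    calc ediam (s i) = (ediam (s i) ^ d) ^ d⁻¹ := (ENNReal.rpow_rpow_inv hd.ne' _).symm
      _ ≤ tail F ^ d⁻¹ := ENNReal.rpow_le_rpow (ENNReal.le_tsum i) (inv_nonneg.2 hd.le)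
  have hcover : ∀ F : Finset ι, limsup s cofinite ⊆ ⋃ i : {i // i ∉ F}, s i := by
    intro F x hx
    rw [cofinite.limsup_set_eq] at hx
    obtain ⟨i, hxi, hiF⟩ := hx.exists_notMem_finset F
    exact Set.mem_iUnion.2 ⟨⟨i, hiF⟩, hxi⟩
  refine le_antisymm ?_ zero_le
  calc μH[d] (limsup s cofinite) ≤ liminf tail atTop :=
        Measure.hausdorffMeasure_le_liminf_tsum d _ _ hr (fun F (i : {i // i ∉ F}) => s i)
          (.of_forall hdiam) (.of_forall hcover)
    _ = 0 := htail.liminf_eq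

theorem hausdorffMeasure_limsup_iUnion_eq_zero {ι : ℕ → Type*} [∀ n, Countable (ι n)] {d : ℝ}
    (hd : 0 < d) (t : ∀ n, ι n → Set X) (ht : ∑' n, ∑' i, ediam (t n i) ^ d ≠ ∞) :
    μH[d] (limsup (fun n => ⋃ i, t n i) atTop) = 0 := by
  refine measure_mono_null ?_ (hausdorffMeasure_limsup_cofinite_eq_zero hd
    (fun p : Σ n, ι n => t p.1 p.2) (by rwa [ENNReal.tsum_sigma']))
  intro x hx
  rw [← Nat.cofinite_eq_atTop, cofinite.limsup_set_eq] at hx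
  rw [cofinite.limsup_set_eq]
  refine Set.Infinite.of_image Sigma.fst (hx.mono ?_)
  intro n hn
  obtain ⟨i, hi⟩ := Set.mem_iUnion.1 hn
  exact ⟨⟨n, i⟩, hi, rfl⟩

end HausdorffCantelli

theorem summable_rpow_pow {ρ α : ℝ} (hρ0 : 0 < ρ) (hρ1 : ρ < 1) (hα : 1 < α) :
    Summable fun n : ℕ => ρ ^ α ^ n := by
  refine (summable_geometric_of_lt_one (Real.rpow_nonneg hρ0.le (α - 1))
    (Real.rpow_lt_one hρ0.le hρ1 (by linarith))).of_nonneg_of_le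
    (fun n => Real.rpow_nonneg hρ0.le _) fun n => ?_
  have hBernoulli : (n : ℝ) * (α - 1) ≤ α ^ n := by
    have := one_add_mul_le_pow (by linarith : (-2 : ℝ) ≤ α - 1) n
    rw [add_sub_cancel] at this
    linarith
  calc ρ ^ α ^ n ≤ ρ ^ ((n : ℝ) * (α - 1)) :=
        Real.rpow_le_rpow_of_exponent_ge hρ0 hρ1.le hBernoulli
    _ = (ρ ^ (α - 1)) ^ n := by rw [mul_comm, Real.rpow_mul_natCast hρ0.le]

theorem card_Icc_neg_floor_le {μ : ℝ} (hμ : 0 ≤ μ) :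
    ((Finset.Icc (-⌊μ⌋) ⌊μ⌋).card : ℝ) ≤ 2 * μ + 1 := by
  have hfloor : 0 ≤ ⌊μ⌋ := Int.floor_nonneg.2 hμ
  rw [Int.card_Icc, ← Int.cast_natCast, Int.toNat_of_nonneg (by omega)]
  push_cast
  linarith [Int.floor_le μ]

theorem mem_Icc_neg_floor_floor {μ : ℝ} {l : ℤ} (h : |(l : ℝ)| ≤ μ) :
    l ∈ Finset.Icc (-⌊μ⌋) ⌊μ⌋ := by
  rw [abs_le] at h
  rw [Finset.mem_Icc, neg_le, Int.le_floor, Int.le_floor]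
  push_cast
  constructor <;> linarith

theorem tsum_ediam_Icc_rpow_le {μ r d : ℝ} (hμ : 1 ≤ μ) (hr : 0 ≤ r) (hd : 0 ≤ d) (c : ℤ → ℝ) :
    ∑' l : Finset.Icc (-⌊μ⌋) ⌊μ⌋, ediam (Set.Icc (c l - r) (c l + r)) ^ d
      ≤ ENNReal.ofReal (3 * (μ * (2 * r) ^ d)) := by
  have hterm : ∀ l, ediam (Set.Icc (c l - r) (c l + r)) ^ d = ENNReal.ofReal ((2 * r) ^ d) := by
    intro l
    rw [Real.ediam_Icc, show c l + r - (c l - r) = 2 * r by ring,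
      ENNReal.ofReal_rpow_of_nonneg (by positivity) hd]
  rw [Finset.tsum_subtype (Finset.Icc (-⌊μ⌋) ⌊μ⌋) fun l => ediam (Set.Icc (c l - r) (c l + r)) ^ d]
  simp only [hterm, Finset.sum_const, nsmul_eq_mul]
  rw [← ENNReal.ofReal_natCast, ← ENNReal.ofReal_mul (Nat.cast_nonneg _), ← mul_assoc]
  gcongr
  linarith [card_Icc_neg_floor_le (zero_le_one.trans hμ)]

def decayExponent (ε₀ d : ℝ) : ℝ :=
  ε₀ ^ 2 / 18 * d * (1 + ε₀) - (1 - d) * ((1 + (1 + ε₀)) * (2 / 5 + ε₀ / 2))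

theorem decayExponent_pos {ε₀ d : ℝ} (hε₀ : 0 < ε₀)
    (hd : ((1 + (1 + ε₀)) * (4/5 + ε₀))
      / ((1 + (1 + ε₀)) * (4/5 + ε₀) + 2 * (1 + ε₀) * (ε₀ ^ 2 / 18)) < d) :
    0 < decayExponent ε₀ d := by
  rw [div_lt_iff₀ (by positivity)] at hd
  unfold decayExponent
  linarith

section ExceptionalSet

variable {l₀ ε₀ : ℝ}

theorem two_le_rpow_pow (hl₀ : 2 ≤ l₀) (hε₀ : 0 ≤ ε₀) (q : ℕ) : 2 ≤ l₀ ^ (1 + ε₀) ^ q :=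
  hl₀.trans (Real.self_le_rpow_of_one_le (by linarith) (one_le_pow₀ (by linarith)))

theorem lamP_le_rpow {q : ℕ} : lamP l₀ ε₀ q ≤ l₀ ^ (1 + ε₀) ^ q := Int.floor_le _

theorem rpow_div_two_le_lamP (hl₀ : 2 ≤ l₀) (hε₀ : 0 ≤ ε₀) (q : ℕ) :
    l₀ ^ (1 + ε₀) ^ q / 2 ≤ lamP l₀ ε₀ q := by
  have := two_le_rpow_pow hl₀ hε₀ q
  have := Int.sub_one_lt_floor (l₀ ^ (1 + ε₀) ^ q)
  unfold lamP
  linarith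

theorem one_le_lamP (hl₀ : 2 ≤ l₀) (hε₀ : 0 ≤ ε₀) (q : ℕ) : 1 ≤ lamP l₀ ε₀ q := by
  linarith [rpow_div_two_le_lamP hl₀ hε₀ q, two_le_rpow_pow hl₀ hε₀ q]

theorem muP_eq (hl₀ : 2 ≤ l₀) (hε₀ : 0 ≤ ε₀) (q : ℕ) :
    muP l₀ ε₀ q = (lamP l₀ ε₀ (q - 1) * lamP l₀ ε₀ q) ^ (2 / 5 + ε₀ / 2) := by
  have hroot : ∀ x : ℝ, 0 < x →
      (x ^ (-(2 : ℝ) / 5 + 2 * ε₀)) ^ ((1 : ℝ) / 4) * x ^ ((1 : ℝ) / 2) = x ^ (2 / 5 + ε₀ / 2) := by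
    intro x hx
    rw [← Real.rpow_mul hx.le, ← Real.rpow_add hx]
    ring_nf
  have hpos := fun q => zero_lt_one.trans_le (one_le_lamP hl₀ hε₀ q)
  rw [Real.mul_rpow (hpos _).le (hpos _).le, ← hroot _ (hpos _), ← hroot _ (hpos q)]
  unfold muP delP
  ring

theorem one_le_muP (hl₀ : 2 ≤ l₀) (hε₀ : 0 ≤ ε₀) (q : ℕ) : 1 ≤ muP l₀ ε₀ q := by
  rw [muP_eq hl₀ hε₀ q]
  exact Real.one_le_rpow (one_le_mul_of_one_le_of_one_le (one_le_lamP hl₀ hε₀ _)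
    (one_le_lamP hl₀ hε₀ _)) (by linarith)

theorem muP_succ_le (hl₀ : 2 ≤ l₀) (hε₀ : 0 ≤ ε₀) (q : ℕ) :
    muP l₀ ε₀ (q + 1) ≤ (l₀ ^ (1 + ε₀) ^ q) ^ ((1 + (1 + ε₀)) * (2 / 5 + ε₀ / 2)) := by
  have hΛ : 0 < l₀ ^ (1 + ε₀) ^ q := by linarith [two_le_rpow_pow hl₀ hε₀ q]
  have hsucc : l₀ ^ (1 + ε₀) ^ (q + 1) = (l₀ ^ (1 + ε₀) ^ q) ^ (1 + ε₀) := by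
    rw [pow_succ, Real.rpow_mul (by linarith)]
  rw [muP_eq hl₀ hε₀, Nat.add_sub_cancel, Real.rpow_mul hΛ.le]
  have hlam := fun q => zero_lt_one.trans_le (one_le_lamP hl₀ hε₀ q)
  refine Real.rpow_le_rpow (mul_pos (hlam q) (hlam (q + 1))).le ?_ (by linarith)
  rw [Real.rpow_add hΛ, Real.rpow_one, ← hsucc]
  exact mul_le_mul lamP_le_rpow lamP_le_rpow (hlam _).le hΛ.le

theorem lamP_rpow_neg_le (hl₀ : 2 ≤ l₀) (hε₀ : 0 ≤ ε₀) {e : ℝ} (he : 0 ≤ e) (q : ℕ) :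
    lamP l₀ ε₀ q ^ (-e) ≤ 2 ^ e * (l₀ ^ (1 + ε₀) ^ q) ^ (-e) := by
  have hΛ : 0 < l₀ ^ (1 + ε₀) ^ q := by linarith [two_le_rpow_pow hl₀ hε₀ q]
  calc lamP l₀ ε₀ q ^ (-e) ≤ (l₀ ^ (1 + ε₀) ^ q / 2) ^ (-e) :=
        Real.rpow_le_rpow_of_nonpos (by positivity) (rpow_div_two_le_lamP hl₀ hε₀ q)
          (neg_nonpos.2 he)
    _ = 2 ^ e * (l₀ ^ (1 + ε₀) ^ q) ^ (-e) := by
        rw [Real.div_rpow hΛ.le zero_le_two, Real.rpow_neg zero_le_two, div_inv_eq_mul, mul_comm]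

def radU (l₀ ε₀ : ℝ) (q : ℕ) : ℝ := lamP l₀ ε₀ q ^ (-(ε₀ ^ 2 / 18)) / muP l₀ ε₀ q

theorem radU_nonneg (hl₀ : 2 ≤ l₀) (hε₀ : 0 ≤ ε₀) (q : ℕ) : 0 ≤ radU l₀ ε₀ q :=
  div_nonneg (Real.rpow_nonneg (zero_le_one.trans (one_le_lamP hl₀ hε₀ q)) _)
    (zero_le_one.trans (one_le_muP hl₀ hε₀ q))

theorem muP_mul_radU_rpow_nonneg (hl₀ : 2 ≤ l₀) (hε₀ : 0 ≤ ε₀) (d : ℝ) (q : ℕ) :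
    0 ≤ muP l₀ ε₀ q * (2 * radU l₀ ε₀ q) ^ d :=
  mul_nonneg (zero_le_one.trans (one_le_muP hl₀ hε₀ q))
    (Real.rpow_nonneg (mul_nonneg zero_le_two (radU_nonneg hl₀ hε₀ q)) d)

theorem muP_mul_radU_rpow_succ_le (hl₀ : 2 ≤ l₀) (hε₀ : 0 ≤ ε₀) {d : ℝ} (hd0 : 0 ≤ d)
    (hd1 : d ≤ 1) (q : ℕ) :
    muP l₀ ε₀ (q + 1) * (2 * radU l₀ ε₀ (q + 1)) ^ d
      ≤ 2 ^ d * 2 ^ (ε₀ ^ 2 / 18 * d) * (l₀ ^ (-decayExponent ε₀ d)) ^ (1 + ε₀) ^ q := by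
  set μ := muP l₀ ε₀ (q + 1)
  set lam := lamP l₀ ε₀ (q + 1)
  set Λ := l₀ ^ (1 + ε₀) ^ q
  set e := ε₀ ^ 2 / 18
  have hμ : 0 < μ := zero_lt_one.trans_le (one_le_muP hl₀ hε₀ _)
  have hlam : 0 < lam := zero_lt_one.trans_le (one_le_lamP hl₀ hε₀ _)
  have hΛ : 0 < Λ := by linarith [two_le_rpow_pow hl₀ hε₀ q]
  have hsplit : μ * (2 * (lam ^ (-e) / μ)) ^ d = 2 ^ d * (μ ^ (1 - d) * lam ^ (-(e * d))) := by
    rw [Real.mul_rpow zero_le_two (by positivity), Real.div_rpow (by positivity) hμ.le,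
      ← Real.rpow_mul hlam.le, Real.rpow_sub hμ, Real.rpow_one, neg_mul]
    field_simp
  have hμle : μ ^ (1 - d) ≤ (Λ ^ ((1 + (1 + ε₀)) * (2 / 5 + ε₀ / 2))) ^ (1 - d) :=
    Real.rpow_le_rpow hμ.le (muP_succ_le hl₀ hε₀ q) (by linarith)
  have hlamle : lam ^ (-(e * d)) ≤ 2 ^ (e * d) * (Λ ^ (1 + ε₀)) ^ (-(e * d)) := by
    have hsucc : Λ ^ (1 + ε₀) = l₀ ^ (1 + ε₀) ^ (q + 1) := by
      rw [pow_succ, Real.rpow_mul (by linarith)]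
    rw [hsucc]
    exact lamP_rpow_neg_le hl₀ hε₀ (by positivity) _
  have hexp : (1 + (1 + ε₀)) * (2 / 5 + ε₀ / 2) * (1 - d) + (1 + ε₀) * -(e * d)
      = -decayExponent ε₀ d := by
    unfold decayExponent; ring
  calc μ * (2 * (lam ^ (-e) / μ)) ^ d = 2 ^ d * (μ ^ (1 - d) * lam ^ (-(e * d))) := hsplit
    _ ≤ 2 ^ d * ((Λ ^ ((1 + (1 + ε₀)) * (2 / 5 + ε₀ / 2))) ^ (1 - d)
          * (2 ^ (e * d) * (Λ ^ (1 + ε₀)) ^ (-(e * d)))) := by gcongr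
    _ = 2 ^ d * 2 ^ (e * d) * Λ ^ (-decayExponent ε₀ d) := by
        rw [← Real.rpow_mul hΛ.le, ← Real.rpow_mul hΛ.le, ← hexp, Real.rpow_add hΛ]
        ring
    _ = 2 ^ d * 2 ^ (e * d) * (l₀ ^ (-decayExponent ε₀ d)) ^ (1 + ε₀) ^ q := by
        rw [← Real.rpow_mul (by linarith), ← Real.rpow_mul (by linarith), mul_comm ((1 + ε₀) ^ q)]

theorem summable_muP_mul_radU_rpow (hl₀ : 2 ≤ l₀) (hε₀ : 0 < ε₀) {d : ℝ} (hd0 : 0 ≤ d)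
    (hd1 : d ≤ 1) (hc : 0 < decayExponent ε₀ d) :
    Summable fun q => muP l₀ ε₀ q * (2 * radU l₀ ε₀ q) ^ d := by
  have hρ0 : 0 < l₀ ^ (-decayExponent ε₀ d) := Real.rpow_pos_of_pos (by linarith) _
  have hρ1 : l₀ ^ (-decayExponent ε₀ d) < 1 :=
    Real.rpow_lt_one_of_one_lt_of_neg (by linarith) (neg_neg_of_pos hc)
  refine (summable_nat_add_iff 1).1 <|
    ((summable_rpow_pow hρ0 hρ1 (by linarith : (1 : ℝ) < 1 + ε₀)).mul_left _).of_nonneg_of_le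
      (fun q => muP_mul_radU_rpow_nonneg hl₀ hε₀.le d (q + 1))
      (muP_mul_radU_rpow_succ_le hl₀ hε₀.le hd0 hd1)

theorem iInter_Vq_subset_limsup_Uq :
    ⋂ (q : ℕ) (_ : 1 ≤ q), Vq l₀ ε₀ q ⊆ limsup (Uq l₀ ε₀) atTop := by
  intro x hx
  rw [mem_limsup_iff_frequently_mem, frequently_atTop]
  intro n
  have h := Set.mem_iInter₂.1 hx (n + 1) (Nat.le_add_left 1 n)
  simp only [Vq, Set.mem_iUnion, exists_prop] at h
  obtain ⟨q, hq, hxq⟩ := h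
  exact ⟨q, by omega, hxq⟩

theorem hausdorffMeasure_iInter_Vq_eq_zero {d : ℝ} (hl₀ : 2 ≤ l₀) (hε₀ : 0 < ε₀)
    (hd0 : 0 < d) (hd1 : d ≤ 1) (hc : 0 < decayExponent ε₀ d) :
    μH[d] (⋂ (q : ℕ) (_ : 1 ≤ q), Vq l₀ ε₀ q) = 0 := by
  set μ := muP l₀ ε₀
  set t : ∀ q, Finset.Icc (-⌊μ q⌋) ⌊μ q⌋ → Set ℝ := fun q l =>
    Set.Icc (((l : ℝ) + 1/2) / μ q - radU l₀ ε₀ q) (((l : ℝ) + 1/2) / μ q + radU l₀ ε₀ q)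
  have hcover : ∀ q, Uq l₀ ε₀ q ⊆ ⋃ l, t q l := by
    intro q x hx
    simp only [Uq, Set.mem_iUnion, exists_prop] at hx
    obtain ⟨l, hl, hxl⟩ := hx
    exact Set.mem_iUnion.2 ⟨⟨l, mem_Icc_neg_floor_floor hl⟩, hxl⟩
  have hsummable := (summable_muP_mul_radU_rpow hl₀ hε₀ hd0.le hd1 hc).mul_left 3
  have hsum : ∑' q, ∑' l, ediam (t q l) ^ d
      ≤ ENNReal.ofReal (∑' q, 3 * (μ q * (2 * radU l₀ ε₀ q) ^ d)) := calc
    _ ≤ ∑' q, ENNReal.ofReal (3 * (μ q * (2 * radU l₀ ε₀ q) ^ d)) :=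
          ENNReal.tsum_le_tsum fun q => tsum_ediam_Icc_rpow_le (one_le_muP hl₀ hε₀.le q)
            (radU_nonneg hl₀ hε₀.le q) hd0.le fun l => ((l : ℝ) + 1/2) / μ q
    _ = ENNReal.ofReal (∑' q, 3 * (μ q * (2 * radU l₀ ε₀ q) ^ d)) :=
          (ENNReal.ofReal_tsum_of_nonneg (fun q => mul_nonneg zero_le_three
            (muP_mul_radU_rpow_nonneg hl₀ hε₀.le d q)) hsummable).symm
  exact measure_mono_null (iInter_Vq_subset_limsup_Uq.trans
    (limsup_le_limsup (.of_forall hcover))) (hausdorffMeasure_limsup_iUnion_eq_zero hd0 t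
      (ne_top_of_le_ne_top ENNReal.ofReal_ne_top hsum))

end ExceptionalSet

/-- **The exceptional set has small Hausdorff dimension** (Section 7 of the paper):
for every admissible `d < 1`, the set `Ω := ⋂_{q≥1} V^{(q)}` satisfies `dimH Ω ≤ d`;
in particular `dimH Ω < 1` and `Ω` is Lebesgue-null. -/
theorem exceptional_set_dimension :
    ∃ ε' : ℝ, 0 < ε' ∧ ∀ ε₀ : ℝ, 0 < ε₀ → ε₀ < ε' →
    ∃ Λ₀ : ℝ, ∀ l₀ : ℝ, Λ₀ ≤ l₀ →
    ∀ d : ℝ, 0 < d → d < 1 →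
      ((1 + (1 + ε₀)) * (4/5 + ε₀))
          / ((1 + (1 + ε₀)) * (4/5 + ε₀) + 2 * (1 + ε₀) * (ε₀ ^ 2 / 18)) < d →
      dimH (⋂ (q : ℕ) (_ : 1 ≤ q), Vq l₀ ε₀ q) ≤ ENNReal.ofReal d ∧
      dimH (⋂ (q : ℕ) (_ : 1 ≤ q), Vq l₀ ε₀ q) < 1 ∧
      volume (⋂ (q : ℕ) (_ : 1 ≤ q), Vq l₀ ε₀ q) = 0 := by
  refine ⟨1, one_pos, fun ε₀ hε₀ _ => ⟨2, fun l₀ hl₀ d hd0 hd1 hdT => ?_⟩⟩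
  have hnull := hausdorffMeasure_iInter_Vq_eq_zero hl₀ hε₀ hd0 hd1.le (decayExponent_pos hε₀ hdT)
  have hdim : dimH (⋂ (q : ℕ) (_ : 1 ≤ q), Vq l₀ ε₀ q) ≤ ENNReal.ofReal d := by
    refine dimH_le_of_hausdorffMeasure_ne_top (d := d.toNNReal) ?_
    rw [Real.coe_toNNReal d hd0.le, hnull]
    exact ENNReal.zero_ne_top
  have hdim1 := hdim.trans_lt (ENNReal.ofReal_lt_one.2 hd1)
  refine ⟨hdim, hdim1, ?_⟩
  rw [← hausdorffMeasure_real]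
  exact_mod_cast hausdorffMeasure_of_dimH_lt (d := 1) (by exact_mod_cast hdim1)
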